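/- arXiv:2303.02612 — 6 statements merged into one kernel-verified Lean document; each statement's English description precedes it below -/
import Mathlib

section
/- Let m ≥ 1 and let x_1, …, x_m and P_1, …, P_m be real numbers satisfying Σ_{j=1}^m x_j · P_j^{2i-1} = 0 for every i = 1, …, m. Then for every nonzero real number w one has Σ_{j : P_j² = w} x_j · P_j = 0. -/
open Polynomial Finset

theorem stmt_6 (m : ℕ) (hm : 1 ≤ m) (x P : Fin m → ℝ)
    (hsys : ∀ i : Fin m, ∑ j : Fin m, x j * P j ^ (2 * (i : ℕ) + 1) = 0) :
    ∀ w : ℝ, w ≠ 0 →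
      ∑ j ∈ Finset.univ.filter (fun j : Fin m => P j ^ 2 = w), x j * P j = 0 := by
  -- key: for any polynomial Q of natDegree < m, ∑ x_j P_j Q(P_j²) = 0
  have key : ∀ Q : Polynomial ℝ, Q.natDegree < m →
      ∑ j : Fin m, x j * P j * Q.eval (P j ^ 2) = 0 := by
    intro Q hQ
    have : ∑ j : Fin m, x j * P j * Q.eval (P j ^ 2)
        = ∑ i ∈ Q.support, Q.coeff i * ∑ j : Fin m, x j * P j ^ (2 * i + 1) := by
      have h1 : ∀ j : Fin m, x j * P j * Q.eval (P j ^ 2)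
          = ∑ i ∈ Q.support, Q.coeff i * (x j * P j ^ (2 * i + 1)) := by
        intro j
        rw [eval_eq_sum, Polynomial.sum, Finset.mul_sum]
        refine Finset.sum_congr rfl fun i _ => ?_
        ring
      simp_rw [h1]
      rw [Finset.sum_comm]
      simp_rw [Finset.mul_sum]
    rw [this]
    refine Finset.sum_eq_zero fun i hi => ?_
    have him : i < m := lt_of_le_of_lt (le_natDegree_of_mem_supp i hi) hQ
    rw [hsys ⟨i, him⟩, mul_zero]
  intro w hw
  set S : Finset ℝ := (Finset.univ.filter (fun j : Fin m => P j ≠ 0)).image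
    (fun j => P j ^ 2) with hS
  by_cases hwS : w ∈ S
  · have hcard : S.card ≤ m := le_trans (Finset.card_image_le) (le_trans (Finset.card_filter_le _ _) (by simp))
    have hinj : Set.InjOn (id : ℝ → ℝ) S := fun a _ b _ h => h
    set Q := Lagrange.basis S (id : ℝ → ℝ) w with hQdef
    have hdeg : Q.natDegree < m := by
      rw [hQdef, Lagrange.natDegree_basis hinj hwS]
      omega
    have h0 := key Q hdeg
    rw [← h0, Finset.sum_filter]
    refine Finset.sum_congr rfl fun j _ => ?_
    by_cases hj : P j ^ 2 = w
    · rw [if_pos hj, hj]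
      have := Lagrange.eval_basis_self hinj hwS
      simp only [id] at this
      rw [hQdef, this, mul_one]
    · rw [if_neg hj]
      by_cases hPj : P j = 0
      · simp [hPj]
      · have hjS : P j ^ 2 ∈ S := Finset.mem_image.mpr ⟨j, by simp [hPj], rfl⟩
        have := Lagrange.eval_basis_of_ne (v := (id : ℝ → ℝ)) (Ne.symm hj) hjS
        simp only [id] at this
        rw [hQdef, this, mul_zero]
  · refine Finset.sum_eq_zero fun j hj => ?_
    rw [Finset.mem_filter] at hj
    exfalso
    apply hwS
    refine Finset.mem_image.mpr ⟨j, ?_, hj.2⟩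
    simp only [Finset.mem_filter, Finset.mem_univ, true_and]
    intro h0
    exact hw (by rw [← hj.2, h0]; ring)
end

section
/- There do not exist an integer m ≥ 1, real numbers x_1, …, x_m and P_1, …, P_m, and real numbers c ≠ 0, a ≠ 0, such that for every odd integer q ≥ 1 one has Σ_{j=1}^m x_j · P_j^q = 0 and for every even integer q ≥ 2 one has Σ_{j=1}^m x_j · P_j^q = ((q-1)!!/q!!) · (-c)^{q/2} · a. -/
open Finset Polynomial

/-- The hypergeometric sequence `v k = ((2k+1)!!/(2k+2)!!) (-c)^(k+1) a`. -/
private noncomputable def vv (c a : ℝ) (k : ℕ) : ℝ :=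
  ((Nat.doubleFactorial (2*k+1) : ℝ) / (Nat.doubleFactorial (2*k+2) : ℝ)) * (-c)^(k+1) * a

private lemma dfac_ne_zero (n : ℕ) : (Nat.doubleFactorial n : ℝ) ≠ 0 := by
  exact_mod_cast (Nat.doubleFactorial_pos n).ne'

private lemma vv_ne_zero {c a : ℝ} (hc : c ≠ 0) (ha : a ≠ 0) (k : ℕ) : vv c a k ≠ 0 := by
  unfold vv
  exact mul_ne_zero (mul_ne_zero (div_ne_zero (dfac_ne_zero _) (dfac_ne_zero _))
    (pow_ne_zero _ (neg_ne_zero.2 hc))) ha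

private lemma vv_succ (c a : ℝ) (m : ℕ) :
    vv c a (m+1) * (2*(m:ℝ)+4) = vv c a m * (-c) * (2*(m:ℝ)+3) := by
  unfold vv
  have e1 : 2*(m+1)+1 = (2*m+1)+2 := by ring
  have e2 : 2*(m+1)+2 = (2*m+2)+2 := by ring
  rw [e1, e2, Nat.doubleFactorial_add_two, Nat.doubleFactorial_add_two]
  have h1 := dfac_ne_zero (2*m+1)
  have h2 := dfac_ne_zero (2*m+2)
  push_cast
  field_simp
  ring

private lemma vv_prod (c a : ℝ) (k t : ℕ) :
    vv c a k * (-c)^t * ∏ j ∈ range t, (2*(k:ℝ)+2*(j:ℝ)+3) =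
      vv c a (k+t) * ∏ j ∈ range t, (2*(k:ℝ)+2*(j:ℝ)+4) := by
  induction t with
  | zero => simp
  | succ t ih =>
    rw [prod_range_succ, prod_range_succ]
    have h := vv_succ c a (k+t)
    push_cast at h
    calc vv c a k * (-c)^(t+1) * ((∏ j ∈ range t, (2*(k:ℝ)+2*(j:ℝ)+3)) * (2*(k:ℝ)+2*(t:ℝ)+3))
        = (vv c a k * (-c)^t * ∏ j ∈ range t, (2*(k:ℝ)+2*(j:ℝ)+3)) * ((-c) * (2*(k:ℝ)+2*(t:ℝ)+3)) := by
          ring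
      _ = (vv c a (k+t) * ∏ j ∈ range t, (2*(k:ℝ)+2*(j:ℝ)+4)) * ((-c) * (2*(k:ℝ)+2*(t:ℝ)+3)) := by
          rw [ih]
      _ = (vv c a (k+t) * (-c) * (2*((k:ℝ)+(t:ℝ))+3)) * ∏ j ∈ range t, (2*(k:ℝ)+2*(j:ℝ)+4) := by
          ring
      _ = (vv c a (k+t+1) * (2*((k:ℝ)+(t:ℝ))+4)) * ∏ j ∈ range t, (2*(k:ℝ)+2*(j:ℝ)+4) := by
          rw [← h]
      _ = vv c a (k+(t+1)) * ((∏ j ∈ range t, (2*(k:ℝ)+2*(j:ℝ)+4)) * (2*(k:ℝ)+2*(t:ℝ)+4)) := by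
          rw [show k+(t+1) = k+t+1 from rfl]; ring

/-- A nontrivial constant-coefficient linear recurrence cannot hold for `vv`. -/
private lemma keyL {c a : ℝ} (hc : c ≠ 0) (ha : a ≠ 0) (n : ℕ) (γ : ℕ → ℝ)
    (hrec : ∀ k : ℕ, ∑ t ∈ range (n+1), γ t * vv c a (k+t) = 0) :
    ∀ t ≤ n, γ t = 0 := by
  -- the polynomial obtained by clearing denominators
  set Q : ℝ[X] := ∑ t ∈ range (n+1), Polynomial.C (γ t * (-c)^t) *
      (∏ j ∈ range t, (Polynomial.C 2 * Polynomial.X + Polynomial.C (2*(j:ℝ)+3))) *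
      (∏ j ∈ Ico t n, (Polynomial.C 2 * Polynomial.X + Polynomial.C (2*(j:ℝ)+4))) with hQ
  have hQeval : ∀ x : ℝ, Q.eval x =
      ∑ t ∈ range (n+1), γ t * (-c)^t *
        (∏ j ∈ range t, (2*x+2*(j:ℝ)+3)) * (∏ j ∈ Ico t n, (2*x+2*(j:ℝ)+4)) := by
    intro x
    rw [hQ]
    simp only [eval_finset_sum, eval_mul, eval_C, eval_prod, eval_add, eval_X]
    refine Finset.sum_congr rfl fun t _ => ?_
    have p1 : (∏ j ∈ range t, (2*x + (2*(j:ℝ)+3))) = ∏ j ∈ range t, (2*x+2*(j:ℝ)+3) :=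
      Finset.prod_congr rfl fun j _ => by ring
    have p2 : (∏ j ∈ Ico t n, (2*x + (2*(j:ℝ)+4))) = ∏ j ∈ Ico t n, (2*x+2*(j:ℝ)+4) :=
      Finset.prod_congr rfl fun j _ => by ring
    rw [p1, p2]
  -- Q vanishes at all naturals
  have hQnat : ∀ k : ℕ, Q.eval (k:ℝ) = 0 := by
    intro k
    have hmain : vv c a k * Q.eval (k:ℝ) =
        (∑ t ∈ range (n+1), γ t * vv c a (k+t)) * ∏ j ∈ range n, (2*(k:ℝ)+2*(j:ℝ)+4) := by
      rw [hQeval, Finset.mul_sum, Finset.sum_mul]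
      refine Finset.sum_congr rfl ?_
      intro t ht
      have htn : t ≤ n := Nat.lt_succ_iff.mp (mem_range.mp ht)
      have hsplit : (∏ j ∈ range t, (2*(k:ℝ)+2*(j:ℝ)+4)) * ∏ j ∈ Ico t n, (2*(k:ℝ)+2*(j:ℝ)+4)
          = ∏ j ∈ range n, (2*(k:ℝ)+2*(j:ℝ)+4) :=
        Finset.prod_range_mul_prod_Ico _ htn
      calc vv c a k * (γ t * (-c)^t * (∏ j ∈ range t, (2*(k:ℝ)+2*(j:ℝ)+3)) *
              ∏ j ∈ Ico t n, (2*(k:ℝ)+2*(j:ℝ)+4))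
          = γ t * ((vv c a k * (-c)^t * ∏ j ∈ range t, (2*(k:ℝ)+2*(j:ℝ)+3)) *
              ∏ j ∈ Ico t n, (2*(k:ℝ)+2*(j:ℝ)+4)) := by ring
        _ = γ t * ((vv c a (k+t) * ∏ j ∈ range t, (2*(k:ℝ)+2*(j:ℝ)+4)) *
              ∏ j ∈ Ico t n, (2*(k:ℝ)+2*(j:ℝ)+4)) := by rw [vv_prod]
        _ = γ t * vv c a (k+t) * ((∏ j ∈ range t, (2*(k:ℝ)+2*(j:ℝ)+4)) *
              ∏ j ∈ Ico t n, (2*(k:ℝ)+2*(j:ℝ)+4)) := by ring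
        _ = γ t * vv c a (k+t) * ∏ j ∈ range n, (2*(k:ℝ)+2*(j:ℝ)+4) := by rw [hsplit]
    rw [hrec k, zero_mul] at hmain
    exact (mul_eq_zero.mp hmain).resolve_left (vv_ne_zero hc ha k)
  -- hence Q = 0
  have hQ0 : Q = 0 := by
    refine Q.eq_zero_of_infinite_isRoot ?_
    apply Set.Infinite.mono (s := Set.range (Nat.cast : ℕ → ℝ))
    · rintro x ⟨k, rfl⟩; exact hQnat k
    · exact Set.infinite_range_of_injective Nat.cast_injective
  -- now evaluate at -(t) - 3/2 and induct
  intro t htn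
  induction t using Nat.strong_induction_on with
  | _ t ih =>
  have hev : Q.eval (-(t:ℝ) - 3/2) = 0 := by rw [hQ0]; simp
  rw [hQeval] at hev
  have hsingle : ∑ s ∈ range (n+1), γ s * (-c)^s *
      (∏ j ∈ range s, (2*(-(t:ℝ) - 3/2)+2*(j:ℝ)+3)) *
      (∏ j ∈ Ico s n, (2*(-(t:ℝ) - 3/2)+2*(j:ℝ)+4))
      = γ t * (-c)^t * (∏ j ∈ range t, (2*(-(t:ℝ) - 3/2)+2*(j:ℝ)+3)) *
        (∏ j ∈ Ico t n, (2*(-(t:ℝ) - 3/2)+2*(j:ℝ)+4)) := by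
    refine Finset.sum_eq_single t ?_ ?_
    · intro s hs hst
      rcases Nat.lt_or_ge s t with hlt | hge
      · rw [ih s hlt (le_trans hlt.le htn)]; ring
      · have hlt' : t < s := lt_of_le_of_ne hge (Ne.symm hst)
        have : (∏ j ∈ range s, (2*(-(t:ℝ) - 3/2)+2*(j:ℝ)+3)) = 0 := by
          refine Finset.prod_eq_zero (mem_range.mpr hlt') ?_
          ring
        rw [this]; ring
    · intro h; exact absurd (mem_range.mpr (Nat.lt_succ_of_le htn)) h
  rw [hsingle] at hev
  have h1 : (∏ j ∈ range t, (2*(-(t:ℝ) - 3/2)+2*(j:ℝ)+3)) ≠ 0 := by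
    rw [Finset.prod_ne_zero_iff]
    intro j hj
    have hjt : (j:ℝ) < t := by exact_mod_cast mem_range.mp hj
    intro h; nlinarith
  have h2 : (∏ j ∈ Ico t n, (2*(-(t:ℝ) - 3/2)+2*(j:ℝ)+4)) ≠ 0 := by
    rw [Finset.prod_ne_zero_iff]
    intro j hj
    have hjt : (t:ℝ) ≤ j := by exact_mod_cast (mem_Ico.mp hj).1
    intro h; nlinarith
  have h3 : (-c)^t ≠ 0 := pow_ne_zero _ (neg_ne_zero.2 hc)
  have := mul_ne_zero (mul_ne_zero h3 h1) h2
  rcases mul_eq_zero.mp hev with h | h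
  · rcases mul_eq_zero.mp h with h' | h'
    · rcases mul_eq_zero.mp h' with h'' | h''
      · exact h''
      · exact absurd h'' h3
    · exact absurd h' h1
  · exact absurd h h2

theorem stmt_7 :
    ¬ ∃ (m : ℕ) (_ : 1 ≤ m) (x P : Fin m → ℝ) (c a : ℝ),
      c ≠ 0 ∧ a ≠ 0 ∧
      (∀ q : ℕ, 1 ≤ q → Odd q → ∑ j : Fin m, x j * P j ^ q = 0) ∧
      (∀ q : ℕ, 2 ≤ q → Even q →
        ∑ j : Fin m, x j * P j ^ q =
          ((Nat.doubleFactorial (q - 1) : ℝ) / (Nat.doubleFactorial q : ℝ)) *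
            (-c) ^ (q / 2) * a) := by
  rintro ⟨m, hm, x, P, c, a, hc, ha, _hodd, heven⟩
  -- the monic polynomial with roots P j ^ 2
  set h : Polynomial ℝ := ∏ j : Fin m, (Polynomial.X - Polynomial.C ((P j)^2)) with hh
  have hmonic : h.Monic := monic_prod_of_monic _ _ fun j _ => monic_X_sub_C _
  have hdeg : h.natDegree = m := by
    rw [hh, Polynomial.natDegree_prod_of_monic _ _ fun j _ => monic_X_sub_C _]
    simp only [Polynomial.natDegree_X_sub_C, Finset.sum_const, Finset.card_univ,
      Fintype.card_fin, smul_eq_mul, mul_one]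
  have hcoefftop : h.coeff m = 1 := by
    have := hmonic.coeff_natDegree
    rwa [hdeg] at this
  -- the even sums equal vv
  have hsv : ∀ k : ℕ, ∑ j : Fin m, x j * P j ^ (2*k+2) = vv c a k := by
    intro k
    have h2 : 2 ≤ 2*k+2 := by omega
    have heq := heven (2*k+2) h2 ⟨k+1, by ring⟩
    have e1 : 2*k+2-1 = 2*k+1 := by omega
    have e2 : (2*k+2)/2 = k+1 := by omega
    rw [heq, e1, e2]; rfl
  -- recurrence from the polynomial
  have hrec : ∀ k : ℕ, ∑ i ∈ range (m+1), h.coeff i * vv c a (k+i) = 0 := by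
    intro k
    have hstep : ∀ i : ℕ, vv c a (k+i) = ∑ j : Fin m, x j * P j ^ (2*k+2) * ((P j)^2)^i := by
      intro i
      rw [← hsv (k+i)]
      refine Finset.sum_congr rfl fun j _ => ?_
      rw [mul_assoc, ← pow_mul, ← pow_add]
      congr 2
      ring
    calc ∑ i ∈ range (m+1), h.coeff i * vv c a (k+i)
        = ∑ i ∈ range (m+1), ∑ j : Fin m, h.coeff i * (x j * P j ^ (2*k+2) * ((P j)^2)^i) := by
          refine Finset.sum_congr rfl fun i _ => ?_
          rw [hstep i, Finset.mul_sum]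
      _ = ∑ j : Fin m, ∑ i ∈ range (m+1), h.coeff i * (x j * P j ^ (2*k+2) * ((P j)^2)^i) :=
          Finset.sum_comm
      _ = ∑ j : Fin m, x j * P j ^ (2*k+2) * h.eval ((P j)^2) := by
          refine Finset.sum_congr rfl fun j _ => ?_
          rw [Polynomial.eval_eq_sum_range, hdeg, Finset.mul_sum]
          refine Finset.sum_congr rfl fun i _ => ?_
          ring
      _ = 0 := by
          refine Finset.sum_eq_zero fun j _ => ?_
          have : h.eval ((P j)^2) = 0 := by
            rw [hh, Polynomial.eval_prod]
            refine Finset.prod_eq_zero (Finset.mem_univ j) ?_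
            simp
          rw [this, mul_zero]
  have := keyL hc ha m h.coeff hrec m le_rfl
  rw [hcoefftop] at this
  exact one_ne_zero this
end

section
/- There do not exist: an open interval I ⊆ ℝ, integers d > r ≥ 2, positive real numbers n_2, …, n_d, a real number a ≠ 0, and differentiable functions μ_2, …, μ_d, P : I → ℝ such that on all of I: (i) P ≠ 0 and P′ = P²; (ii) μ_α′ = 0 for 2 ≤ α ≤ r and μ_α′ = μ_α · P for r+1 ≤ α ≤ d; (iii) Σ_{α=r+1}^d n_α μ_α = 0; (iv) Σ_{α=2}^r n_α μ_α = a; and (v) 2·(Σ_{α=r+1}^d n_α − 3)·P²·(Σ_{α=r+1}^d n_α μ_α²) + (Σ_{α=2}^d n_α μ_α²)² = 0. -/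
theorem stmt_10 :
    ¬ ∃ (s t : ℝ) (_ : s < t) (d r : ℕ) (nn : ℕ → ℝ) (μ : ℕ → ℝ → ℝ)
        (P : ℝ → ℝ) (a : ℝ),
      2 ≤ r ∧ r < d ∧
      (∀ α ∈ Finset.Icc 2 d, 0 < nn α) ∧
      a ≠ 0 ∧
      (∀ x ∈ Set.Ioo s t, P x ≠ 0) ∧
      (∀ x ∈ Set.Ioo s t, HasDerivAt P ((P x) ^ 2) x) ∧
      (∀ α ∈ Finset.Icc 2 r, ∀ x ∈ Set.Ioo s t, HasDerivAt (μ α) 0 x) ∧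
      (∀ α ∈ Finset.Icc (r + 1) d, ∀ x ∈ Set.Ioo s t,
        HasDerivAt (μ α) (μ α x * P x) x) ∧
      (∀ x ∈ Set.Ioo s t, ∑ α ∈ Finset.Icc (r + 1) d, nn α * μ α x = 0) ∧
      (∀ x ∈ Set.Ioo s t, ∑ α ∈ Finset.Icc 2 r, nn α * μ α x = a) ∧
      (∀ x ∈ Set.Ioo s t,
        2 * ((∑ α ∈ Finset.Icc (r + 1) d, nn α) - 3) * (P x) ^ 2 *
            (∑ α ∈ Finset.Icc (r + 1) d, nn α * (μ α x) ^ 2) +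
          (∑ α ∈ Finset.Icc 2 d, nn α * (μ α x) ^ 2) ^ 2 = 0) := by
  rintro ⟨s, t, hst, d, r, nn, μ, P, a, h2r, hrd, hnn, ha, hPne, hP, hμ1, hμ2,
    hsum0, hsuma, hv⟩
  set x₀ : ℝ := (s + t) / 2 with hx₀def
  have hx₀ : x₀ ∈ Set.Ioo s t := ⟨by simp [hx₀def]; linarith, by simp [hx₀def]; linarith⟩
  have hunion : Finset.Icc 2 r ∪ Finset.Icc (r + 1) d = Finset.Icc 2 d := by
    ext n
    simp only [Finset.mem_union, Finset.mem_Icc]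
    omega
  have hdisj : Disjoint (Finset.Icc 2 r) (Finset.Icc (r + 1) d) := by
    simp only [Finset.disjoint_left, Finset.mem_Icc]; omega
  have hBsplit : ∀ f : ℕ → ℝ,
      ∑ α ∈ Finset.Icc 2 d, f α
        = ∑ α ∈ Finset.Icc 2 r, f α + ∑ α ∈ Finset.Icc (r + 1) d, f α := by
    intro f; rw [← hunion, Finset.sum_union hdisj]
  -- abbreviations at x₀
  set A : ℝ := ∑ α ∈ Finset.Icc (r + 1) d, nn α * (μ α x₀) ^ 2 with hA
  set C : ℝ := ∑ α ∈ Finset.Icc 2 r, nn α * (μ α x₀) ^ 2 with hC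
  set B : ℝ := ∑ α ∈ Finset.Icc 2 d, nn α * (μ α x₀) ^ 2 with hB
  set N : ℝ := ∑ α ∈ Finset.Icc (r + 1) d, nn α with hN
  set p : ℝ := P x₀ with hp
  have hBCA : B = C + A := hBsplit _
  -- derivative of A-function
  have hAder : HasDerivAt (fun x => ∑ α ∈ Finset.Icc (r + 1) d, nn α * (μ α x) ^ 2)
      (2 * A * p) x₀ := by
    have h := HasDerivAt.fun_sum (fun α hα =>
      (((hμ2 α hα x₀ hx₀).fun_pow 2).const_mul (nn α)))
    refine h.congr_deriv ?_
    rw [hA, Finset.mul_sum, Finset.sum_mul]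
    apply Finset.sum_congr rfl
    intro α _
    push_cast
    ring
  -- derivative of C-function
  have hCder : HasDerivAt (fun x => ∑ α ∈ Finset.Icc 2 r, nn α * (μ α x) ^ 2)
      0 x₀ := by
    have h := HasDerivAt.fun_sum (fun α hα =>
      (((hμ1 α hα x₀ hx₀).fun_pow 2).const_mul (nn α)))
    refine h.congr_deriv ?_
    simp
  -- derivative of B-function
  have hBder : HasDerivAt (fun x => ∑ α ∈ Finset.Icc 2 d, nn α * (μ α x) ^ 2)
      (2 * A * p) x₀ := by
    have heq : (fun x => ∑ α ∈ Finset.Icc 2 d, nn α * (μ α x) ^ 2)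
        = fun x => (∑ α ∈ Finset.Icc 2 r, nn α * (μ α x) ^ 2)
          + ∑ α ∈ Finset.Icc (r + 1) d, nn α * (μ α x) ^ 2 := by
      funext x; exact hBsplit _
    rw [heq]
    simpa using hCder.fun_add hAder
  have hPd : HasDerivAt P (p ^ 2) x₀ := hP x₀ hx₀
  -- derivative of the full constraint function
  have hFder : HasDerivAt (fun x =>
      2 * (N - 3) * (P x) ^ 2 * (∑ α ∈ Finset.Icc (r + 1) d, nn α * (μ α x) ^ 2)
        + (∑ α ∈ Finset.Icc 2 d, nn α * (μ α x) ^ 2) ^ 2)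
      ((2 * (N - 3) * ((2 : ℕ) * p ^ (2 - 1) * p ^ 2)) * A
        + (2 * (N - 3) * p ^ 2) * (2 * A * p)
        + (2 : ℕ) * B ^ (2 - 1) * (2 * A * p)) x₀ :=
    (((hPd.pow 2).const_mul (2 * (N - 3))).mul hAder).add (hBder.pow 2)
  have hF0 : HasDerivAt (fun x =>
      2 * (N - 3) * (P x) ^ 2 * (∑ α ∈ Finset.Icc (r + 1) d, nn α * (μ α x) ^ 2)
        + (∑ α ∈ Finset.Icc 2 d, nn α * (μ α x) ^ 2) ^ 2) 0 x₀ := by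
    apply (hasDerivAt_const x₀ (0 : ℝ)).congr_of_eventuallyEq
    filter_upwards [isOpen_Ioo.mem_nhds hx₀] with x hx
    exact hv x hx
  have hD : (2 * (N - 3) * ((2 : ℕ) * p ^ (2 - 1) * p ^ 2)) * A
        + (2 * (N - 3) * p ^ 2) * (2 * A * p)
        + (2 : ℕ) * B ^ (2 - 1) * (2 * A * p) = 0 := hFder.unique hF0
  have hveq : 2 * (N - 3) * p ^ 2 * A + B ^ 2 = 0 := hv x₀ hx₀
  -- simplify derivative equation : 4p * (2(N-3)p²A + AB) = 0
  have hD' : 4 * p * (2 * (N - 3) * p ^ 2 * A + A * B) = 0 := by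
    rw [← hD]; push_cast; ring
  have hpne : p ≠ 0 := hPne x₀ hx₀
  have hkey : 2 * (N - 3) * p ^ 2 * A + A * B = 0 :=
    (mul_eq_zero.1 hD').resolve_left (mul_ne_zero (by norm_num) hpne)
  have hAB : A * B = B ^ 2 := by linarith
  -- positivity facts
  have hAnn : 0 ≤ A := by
    apply Finset.sum_nonneg
    intro α hα
    have : 0 < nn α := hnn α (by simp only [Finset.mem_Icc] at hα ⊢; omega)
    positivity
  have hCpos : 0 < C := by
    have hex : ∃ α ∈ Finset.Icc 2 r, μ α x₀ ≠ 0 := by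
      by_contra h
      push_neg at h
      apply ha
      rw [← hsuma x₀ hx₀]
      exact Finset.sum_eq_zero fun α hα => by rw [h α hα, mul_zero]
    obtain ⟨α, hα, hμα⟩ := hex
    apply Finset.sum_pos'
    · intro β hβ
      have : 0 < nn β := hnn β (by simp only [Finset.mem_Icc] at hβ ⊢; omega)
      positivity
    · refine ⟨α, hα, ?_⟩
      have : 0 < nn α := hnn α (by simp only [Finset.mem_Icc] at hα ⊢; omega)
      positivity
  have hBpos : 0 < B := by rw [hBCA]; linarith
  nlinarith [mul_pos hCpos hBpos]
end

section
/- Let A, B, P : I → ℝ be differentiable functions on an open interval I and κ a real constant, with P ≠ 0 and B ≠ 0 on I, satisfying A′ = 2·A·P, B′ = 2·A·P, P′ = P², and κ·P²·A + B² = 0 on I. Then B = A on I. -/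
theorem stmt_11 (s t : ℝ) (A B P : ℝ → ℝ) (κ : ℝ)
    (hP : ∀ x ∈ Set.Ioo s t, P x ≠ 0)
    (hB : ∀ x ∈ Set.Ioo s t, B x ≠ 0)
    (hA' : ∀ x ∈ Set.Ioo s t, HasDerivAt A (2 * A x * P x) x)
    (hB' : ∀ x ∈ Set.Ioo s t, HasDerivAt B (2 * A x * P x) x)
    (hP' : ∀ x ∈ Set.Ioo s t, HasDerivAt P ((P x) ^ 2) x)
    (hconstraint : ∀ x ∈ Set.Ioo s t, κ * (P x) ^ 2 * A x + (B x) ^ 2 = 0) :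
    ∀ x ∈ Set.Ioo s t, B x = A x := by
  intro x hx
  have hf : HasDerivAt (fun y => κ * (P y) ^ 2 * A y + (B y) ^ 2)
      ((κ * ((2 : ℕ) * P x ^ 1 * (P x ^ 2)) * A x + κ * (P x) ^ 2 * (2 * A x * P x))
        + (2 : ℕ) * B x ^ 1 * (2 * A x * P x)) x := by
    exact ((((hasDerivAt_const x κ).mul ((hP' x hx).pow 2)).mul (hA' x hx)).congr_deriv
      (by simp only [Pi.mul_apply, Pi.pow_apply]; ring)).add ((hB' x hx).pow 2)
  have hz : HasDerivAt (fun y => κ * (P y) ^ 2 * A y + (B y) ^ 2) 0 x := by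
    refine (hasDerivAt_const x (0:ℝ)).congr_of_eventuallyEq ?_
    filter_upwards [isOpen_Ioo.mem_nhds hx] with y hy
    exact hconstraint y hy
  have hD := hf.unique hz
  have hc := hconstraint x hx
  have hPx := hP x hx
  have hBx := hB x hx
  simp only [pow_one, Nat.cast_ofNat] at hD
  have h1 : P x * (B x * (A x - B x)) = 0 := by linear_combination (1/4) * hD - P x * hc
  rcases mul_eq_zero.1 h1 with h | h
  · exact absurd h hPx
  rcases mul_eq_zero.1 h with h | h
  · exact absurd h hBx
  linarith
end

section
/- There do not exist an open interval I ⊆ ℝ, a real number H ≠ 0, and differentiable functions μ, P, γ : I → ℝ such that on all of I: P ≠ 0, μ′ = μ·P, P′ = P², γ′ = γ², and −4·μ²·P² + 4·μ²·P·γ + (2·μ² + 25·H²)² = 0. -/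
/-- If a function vanishes on an open interval and has a derivative at an interior
point, the derivative is zero. -/
lemma deriv_zero_of_eq_zero {s t : ℝ} {f : ℝ → ℝ} {d x : ℝ}
    (hx : x ∈ Set.Ioo s t) (h0 : ∀ y ∈ Set.Ioo s t, f y = 0)
    (hd : HasDerivAt f d x) : d = 0 := by
  have hev : f =ᶠ[nhds x] (fun _ => (0:ℝ)) :=
    Filter.eventuallyEq_of_mem (isOpen_Ioo.mem_nhds hx) h0
  have : HasDerivAt f 0 x := (hasDerivAt_const x (0:ℝ)).congr_of_eventuallyEq hev
  exact hd.unique this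

theorem stmt_12 :
    ¬ ∃ (s t : ℝ) (_ : s < t) (H : ℝ) (μ P γ : ℝ → ℝ),
      H ≠ 0 ∧
      (∀ x ∈ Set.Ioo s t, P x ≠ 0) ∧
      (∀ x ∈ Set.Ioo s t, HasDerivAt μ (μ x * P x) x) ∧
      (∀ x ∈ Set.Ioo s t, HasDerivAt P ((P x) ^ 2) x) ∧
      (∀ x ∈ Set.Ioo s t, HasDerivAt γ ((γ x) ^ 2) x) ∧
      (∀ x ∈ Set.Ioo s t,
        -4 * (μ x) ^ 2 * (P x) ^ 2 + 4 * (μ x) ^ 2 * P x * γ x +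
          (2 * (μ x) ^ 2 + 25 * H ^ 2) ^ 2 = 0) := by
  rintro ⟨s, t, hst, H, μ, P, γ, hH, hP0, hμ', hP', hγ', hE⟩
  have hHsq : (0:ℝ) < 25 * H ^ 2 := by positivity
  -- μ never vanishes on I
  have hμ0 : ∀ x ∈ Set.Ioo s t, μ x ≠ 0 := by
    intro x hx hm
    have h := hE x hx
    rw [hm] at h
    nlinarith
  -- First derivative of the constraint: F := -4P² + 3Pγ + γ² + 2(2μ² + 25H²) = 0 on I
  have hF : ∀ x ∈ Set.Ioo s t,
      -4 * (P x) ^ 2 + 3 * P x * γ x + (γ x) ^ 2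
        + 2 * (2 * (μ x) ^ 2 + 25 * H ^ 2) = 0 := by
    intro x hx
    have hm := hμ' x hx; have hp := hP' x hx; have hg := hγ' x hx
    have hD : HasDerivAt (fun y => -4 * (μ y) ^ 2 * (P y) ^ 2 + 4 * (μ y) ^ 2 * P y * γ y +
          (2 * (μ y) ^ 2 + 25 * H ^ 2) ^ 2)
        (4 * (μ x) ^ 2 * P x *
          (-4 * (P x) ^ 2 + 3 * P x * γ x + (γ x) ^ 2
            + 2 * (2 * (μ x) ^ 2 + 25 * H ^ 2))) x := by
      have h := ((((hm.pow 2).const_mul (-4)).mul (hp.pow 2)).add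
          ((((hm.pow 2).const_mul 4).mul hp).mul hg)).add
          ((((hm.pow 2).const_mul 2).add_const (25 * H ^ 2)).pow 2)
      convert h using 1
      · rfl
      · rfl
      · rfl
      · simp only [Pi.pow_apply, Pi.mul_apply, Nat.cast_ofNat, Nat.add_one_sub_one]
        ring
    have h0 := deriv_zero_of_eq_zero hx hE hD
    have h4 : 4 * (μ x) ^ 2 * P x ≠ 0 :=
      mul_ne_zero (mul_ne_zero (by norm_num) (pow_ne_zero 2 (hμ0 x hx))) (hP0 x hx)
    exact (mul_eq_zero.mp h0).resolve_left h4
  -- Second derivative: G := -8P³ + 3P²γ + 3Pγ² + 2γ³ + 8μ²P = 0 on I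
  have hG : ∀ x ∈ Set.Ioo s t,
      -8 * (P x) ^ 3 + 3 * (P x) ^ 2 * γ x + 3 * P x * (γ x) ^ 2
        + 2 * (γ x) ^ 3 + 8 * (μ x) ^ 2 * P x = 0 := by
    intro x hx
    have hm := hμ' x hx; have hp := hP' x hx; have hg := hγ' x hx
    have hD : HasDerivAt (fun y => -4 * (P y) ^ 2 + 3 * P y * γ y + (γ y) ^ 2
          + 2 * (2 * (μ y) ^ 2 + 25 * H ^ 2))
        (-8 * (P x) ^ 3 + 3 * (P x) ^ 2 * γ x + 3 * P x * (γ x) ^ 2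
          + 2 * (γ x) ^ 3 + 8 * (μ x) ^ 2 * P x) x := by
      have h := ((((hp.pow 2).const_mul (-4)).add ((hp.const_mul 3).mul hg)).add
          (hg.pow 2)).add
          ((((hm.pow 2).const_mul 2).add_const (25 * H ^ 2)).const_mul 2)
      convert h using 1
      · rfl
      · rfl
      · rfl
      · simp only [Pi.pow_apply, Pi.mul_apply, Nat.cast_ofNat, Nat.add_one_sub_one]
        ring
    have h0 := deriv_zero_of_eq_zero hx hF hD
    linarith
  -- Third derivative at the midpoint
  set x₀ : ℝ := (s + t) / 2 with hx₀def
  have hx₀ : x₀ ∈ Set.Ioo s t := ⟨by linarith, by linarith⟩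
  have hm := hμ' x₀ hx₀; have hp := hP' x₀ hx₀; have hg := hγ' x₀ hx₀
  have hD : HasDerivAt (fun y => -8 * (P y) ^ 3 + 3 * (P y) ^ 2 * γ y + 3 * P y * (γ y) ^ 2
        + 2 * (γ y) ^ 3 + 8 * (μ y) ^ 2 * P y)
      (-24 * (P x₀) ^ 4 + 6 * (P x₀) ^ 3 * γ x₀ + 6 * (P x₀) ^ 2 * (γ x₀) ^ 2
        + 6 * P x₀ * (γ x₀) ^ 3 + 6 * (γ x₀) ^ 4 + 24 * (μ x₀) ^ 2 * (P x₀) ^ 2) x₀ := by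
    have h := (((((hp.pow 3).const_mul (-8)).add
        (((hp.pow 2).const_mul 3).mul hg)).add
        ((hp.const_mul 3).mul (hg.pow 2))).add
        ((hg.pow 3).const_mul 2)).add
        (((hm.pow 2).const_mul 8).mul hp)
    convert h using 1
    · rfl
    · rfl
    · rfl
    · simp only [Pi.pow_apply, Pi.mul_apply, Nat.cast_ofNat, Nat.add_one_sub_one]
      ring
  have he4 := deriv_zero_of_eq_zero hx₀ hG hD
  -- Pointwise algebra at x₀
  have he2 := hF x₀ hx₀
  have he3 := hG x₀ hx₀
  have hPx : P x₀ ≠ 0 := hP0 x₀ hx₀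
  have hx2 : (0:ℝ) < (P x₀) ^ 2 :=
    lt_of_le_of_ne (sq_nonneg _) (Ne.symm (pow_ne_zero 2 hPx))
  have key : γ x₀ * (γ x₀ - P x₀) * (2 * (γ x₀) ^ 2 + 2 * P x₀ * γ x₀ + (P x₀) ^ 2) = 0 := by
    linear_combination (1/3 : ℝ) * he4 - P x₀ * he3
  rcases mul_eq_zero.mp key with h | hC
  · rcases mul_eq_zero.mp h with hA | hB
    · -- γ x₀ = 0
      have h5 : -8 * (P x₀) ^ 4 + 8 * (μ x₀) ^ 2 * (P x₀) ^ 2 = 0 := by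
        linear_combination P x₀ * he3 - (3 * (P x₀) ^ 3
          + 3 * (P x₀) ^ 2 * γ x₀ + 2 * P x₀ * (γ x₀) ^ 2) * hA
      nlinarith [he2, hA, mul_pos hHsq hx2]
    · -- γ x₀ = P x₀
      have hgp : γ x₀ = P x₀ := by linarith [sub_eq_zero.mp hB]
      rw [hgp] at he2
      nlinarith [sq_nonneg (μ x₀)]
  · -- 2γ² + 2Pγ + P² = 0
    nlinarith [sq_nonneg (P x₀ + γ x₀), sq_nonneg (γ x₀), hx2]
end

section
/- For every integer n ≥ 3, the cubic polynomial f_n(t) = n⁴·t³ − 2n²(n² − 5n + 5)·t² − (n−1)(2n−5)(3n−5)·t − (n−1)(n−2)² has exactly one real root in the open interval (0, 2); that is, there exists a unique t₀ ∈ (0, 2) with f_n(t₀) = 0. -/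
theorem stmt_13 (n : ℕ) (hn : 3 ≤ n) :
    ∃! t₀ : ℝ, t₀ ∈ Set.Ioo (0 : ℝ) 2 ∧
      (n : ℝ) ^ 4 * t₀ ^ 3 - 2 * (n : ℝ) ^ 2 * ((n : ℝ) ^ 2 - 5 * n + 5) * t₀ ^ 2 -
          ((n : ℝ) - 1) * (2 * n - 5) * (3 * n - 5) * t₀ -
          ((n : ℝ) - 1) * ((n : ℝ) - 2) ^ 2 = 0 := by
  have hN : (3 : ℝ) ≤ (n : ℝ) := by exact_mod_cast hn
  set N : ℝ := (n : ℝ) with hNdef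
  set g : ℝ → ℝ := fun t =>
    N ^ 4 * t ^ 3 - 2 * N ^ 2 * (N ^ 2 - 5 * N + 5) * t ^ 2 -
      (N - 1) * (2 * N - 5) * (3 * N - 5) * t - (N - 1) * (N - 2) ^ 2 with hg
  have hcont : ContinuousOn g (Set.Icc (0 : ℝ) 2) := by
    apply Continuous.continuousOn
    fun_prop
  have hg0 : g 0 < 0 := by
    simp only [hg]
    nlinarith [sq_nonneg (N - 2)]
  have hg2 : 0 < g 2 := by
    simp only [hg]
    nlinarith [sq_nonneg N, sq_nonneg (N - 3)]
  have hzero : (0 : ℝ) ∈ Set.Ioo (g 0) (g 2) := ⟨hg0, hg2⟩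
  have hIVT := intermediate_value_Ioo (by norm_num : (0 : ℝ) ≤ 2) hcont hzero
  obtain ⟨t₀, ht₀mem, ht₀eq⟩ := hIVT
  -- uniqueness: any two roots in (0,2) are equal
  have uniq : ∀ a b : ℝ, a ∈ Set.Ioo (0 : ℝ) 2 → b ∈ Set.Ioo (0 : ℝ) 2 →
      g a = 0 → g b = 0 → a = b := by
    intro a b ha hb hfa hfb
    by_contra hab
    have hab' : a - b ≠ 0 := sub_ne_zero.mpr hab
    have hfact : (a - b) * (N ^ 4 * (a ^ 2 + a * b + b ^ 2)
        - 2 * N ^ 2 * (N ^ 2 - 5 * N + 5) * (a + b)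
        - (N - 1) * (2 * N - 5) * (3 * N - 5)) = 0 := by
      simp only [hg] at hfa hfb
      linear_combination hfa - hfb
    have key : N ^ 4 * (a ^ 2 + a * b + b ^ 2)
        - 2 * N ^ 2 * (N ^ 2 - 5 * N + 5) * (a + b)
        - (N - 1) * (2 * N - 5) * (3 * N - 5) = 0 :=
      (mul_eq_zero.mp hfact).resolve_left hab'
    simp only [hg] at hfa hfb
    have h0 : N ^ 4 * a ^ 2 * b ^ 2 + (N - 1) * (2 * N - 5) * (3 * N - 5) * (a * b)
        + (N - 1) * (N - 2) ^ 2 * (a + b) = 0 := by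
      linear_combination (a * b) * key - b * hfa - a * hfb
    have hC : 0 < (N - 1) * (2 * N - 5) * (3 * N - 5) := by nlinarith
    have hD : 0 < (N - 1) * (N - 2) ^ 2 := by nlinarith
    have hN4 : 0 < N ^ 4 := by positivity
    nlinarith [mul_pos ha.1 hb.1, ha.1, hb.1, mul_pos (mul_pos ha.1 ha.1) (mul_pos hb.1 hb.1),
      mul_pos hC (mul_pos ha.1 hb.1), mul_pos hD (add_pos ha.1 hb.1)]
  refine ⟨t₀, ⟨ht₀mem, ht₀eq⟩, ?_⟩
  intro y ⟨hymem, hyeq⟩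
  exact uniq y t₀ hymem ht₀mem hyeq ht₀eq
end
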